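/- arXiv:2111.11986 — 3 statements merged into one kernel-verified Lean document; each statement's English description precedes it below -/
import Mathlib

section
/- Let H be a real symmetric n×n matrix with largest eigenvalue v ≥ 0, g ∈ ℝⁿ, and c > 0. If δ ∈ ℝⁿ satisfies gᵀδ + (1/2)·δᵀHδ ≥ c, and g ≠ 0, v > 0, then ‖δ‖₂ ≥ (‖g‖₂/v)·(√(1 + 2vc/‖g‖₂²) − 1). -/
/-!
Cauchy–Schwarz bounds `gᵀδ` by `‖g‖‖δ‖` and, since `H ≤ v • 1` in the Loewner order, the quadratic
term is at most `v‖δ‖²`. Hence `c ≤ ‖g‖ d + (v/2) d²` for `d = ‖δ‖`, so `d` is at least the positive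
root of `(v/2) x² + ‖g‖ x - c`.
-/

open Matrix
open scoped ComplexOrder MatrixOrder

namespace Matrix.IsHermitian

variable {n 𝕜 : Type*} [Fintype n] [DecidableEq n] [RCLike 𝕜] {A : Matrix n n 𝕜}

theorem le_algebraMap_of_eigenvalues_le (hA : A.IsHermitian) {v : ℝ}
    (hv : ∀ i, hA.eigenvalues i ≤ v) : A ≤ algebraMap ℝ (Matrix n n 𝕜) v := by
  refine le_algebraMap_of_spectrum_le (fun x hx => ?_) hA.isSelfAdjoint
  obtain ⟨i, rfl⟩ := hA.spectrum_real_eq_range_eigenvalues ▸ hx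
  exact hv i

theorem dotProduct_mulVec_le (hA : A.IsHermitian) {v : ℝ} (hv : ∀ i, hA.eigenvalues i ≤ v)
    (x : n → 𝕜) : star x ⬝ᵥ A *ᵥ x ≤ v * (star x ⬝ᵥ x) := by
  have := (le_iff.mp (hA.le_algebraMap_of_eigenvalues_le hv)).dotProduct_mulVec_nonneg x
  rwa [sub_mulVec, dotProduct_sub, sub_nonneg, Algebra.algebraMap_eq_smul_one, smul_mulVec,
    one_mulVec, dotProduct_smul, RCLike.real_smul_eq_coe_mul] at this

end Matrix.IsHermitian

theorem le_of_le_sqrt_mul_add_half_mul_sq {A d v c : ℝ} (hA : 0 ≤ A) (hd : 0 ≤ d) (hv : 0 < v)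
    (h : c ≤ √A * d + v / 2 * d ^ 2) : √A / v * (√(1 + 2 * v * c / A) - 1) ≤ d := by
  rcases hA.eq_or_lt with rfl | hA
  · simpa using hd
  have hroot : √(A + 2 * v * c) ≤ √A + v * d :=
    Real.sqrt_le_iff.mpr ⟨by positivity, by nlinarith [Real.sq_sqrt hA.le]⟩
  have hscale : √A * √(1 + 2 * v * c / A) = √(A + 2 * v * c) := by
    rw [← Real.sqrt_mul hA.le]
    congr 1
    field_simp
  rw [div_mul_eq_mul_div, div_le_iff₀ hv, mul_sub, hscale]
  linarith

theorem stmt_1_general (n : ℕ) (H : Matrix (Fin n) (Fin n) ℝ) (hH : H.IsHermitian)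
    (v : ℝ) (hv : IsGreatest (Set.range hH.eigenvalues) v) (hv0 : 0 < v)
    (g δ : Fin n → ℝ) (c : ℝ)
    (hδ : g ⬝ᵥ δ + (1 / 2) * (δ ⬝ᵥ H.mulVec δ) ≥ c) :
    Real.sqrt (∑ i, δ i ^ 2) ≥
      (Real.sqrt (∑ i, g i ^ 2) / v) *
        (Real.sqrt (1 + 2 * v * c / (∑ i, g i ^ 2)) - 1) := by
  have hcs : g ⬝ᵥ δ ≤ √(∑ i, g i ^ 2) * √(∑ i, δ i ^ 2) := Real.sum_mul_le_sqrt_mul_sqrt _ g δ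
  have hquad : δ ⬝ᵥ H *ᵥ δ ≤ v * ∑ i, δ i ^ 2 := by
    simpa [dotProduct, sq] using hH.dotProduct_mulVec_le (fun i => hv.2 ⟨i, rfl⟩) δ
  refine le_of_le_sqrt_mul_add_half_mul_sq (by positivity) (Real.sqrt_nonneg _) hv0 ?_
  rw [Real.sq_sqrt (by positivity)]
  linarith

theorem stmt_1 (n : ℕ) (H : Matrix (Fin n) (Fin n) ℝ) (hH : H.IsHermitian)
    (v : ℝ) (hv : IsGreatest (Set.range hH.eigenvalues) v) (hv0 : 0 < v)
    (g δ : Fin n → ℝ) (c : ℝ) (hc : 0 < c) (hg : g ≠ 0)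
    (hδ : g ⬝ᵥ δ + (1 / 2) * (δ ⬝ᵥ H.mulVec δ) ≥ c) :
    Real.sqrt (∑ i, δ i ^ 2) ≥
      (Real.sqrt (∑ i, g i ^ 2) / v) *
        (Real.sqrt (1 + 2 * v * c / (∑ i, g i ^ 2)) - 1) :=
  stmt_1_general n H hH v hv hv0 g δ c hδ
end

section
/- Let H be a real symmetric n×n matrix (n ≥ 1) with largest eigenvalue v > 0, g ∈ ℝⁿ with ‖g‖₁ > 0, and c > 0. If δ ∈ ℝⁿ satisfies gᵀδ + (1/2)·δᵀHδ ≥ c, then ‖δ‖_∞ ≥ (‖g‖₁/(n·v))·(√(1 + 2·n·v·c/‖g‖₁²) − 1). -/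
/-!
Hölder bounds the linear term by `‖g‖₁ ‖δ‖_∞`, and the Rayleigh bound together with
`‖δ‖₂² ≤ n ‖δ‖_∞²` bounds the quadratic term by `n v ‖δ‖_∞²`. Hence `m = ‖δ‖_∞` satisfies
`c ≤ ‖g‖₁ m + (n v / 2) m²`, and the claimed bound is the positive root of this quadratic.
-/

open Matrix

theorem dotProduct_le_sum_abs_mul_norm {ι : Type*} [Fintype ι] (g x : ι → ℝ) :
    g ⬝ᵥ x ≤ (∑ i, |g i|) * ‖x‖ := by
  rw [Finset.sum_mul]
  refine Finset.sum_le_sum fun i _ => ?_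
  calc g i * x i ≤ |g i| * |x i| := abs_mul (g i) (x i) ▸ le_abs_self _
    _ ≤ |g i| * ‖x‖ := by gcongr; exact norm_le_pi_norm x i

theorem dotProduct_self_le_card_mul_norm_sq {ι : Type*} [Fintype ι] (x : ι → ℝ) :
    x ⬝ᵥ x ≤ Fintype.card ι * ‖x‖ ^ 2 := by
  calc x ⬝ᵥ x = ∑ i, ‖x i‖ ^ 2 := by simp [dotProduct, sq]
    _ ≤ ∑ _i : ι, ‖x‖ ^ 2 := by gcongr with i; exact norm_le_pi_norm x i
    _ = Fintype.card ι * ‖x‖ ^ 2 := by simp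

-- `v - H` is positive semidefinite, since its spectrum is `v - spectrum H`.
theorem Matrix.IsHermitian.dotProduct_mulVec_le_mul_dotProduct {ι : Type*} [Fintype ι]
    [DecidableEq ι] {H : Matrix ι ι ℝ} (hH : H.IsHermitian) {v : ℝ}
    (hv : ∀ i, hH.eigenvalues i ≤ v) (x : ι → ℝ) : x ⬝ᵥ H *ᵥ x ≤ v * (x ⬝ᵥ x) := by
  have hA : (algebraMap ℝ _ v - H).IsHermitian :=
    (isHermitian_diagonal_of_self_adjoint _ (by simp [IsSelfAdjoint])).sub hH
  have hpsd : (algebraMap ℝ _ v - H).PosSemidef := by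
    refine hA.posSemidef_iff_eigenvalues_nonneg.mpr fun i => ?_
    have hi := hA.eigenvalues_mem_spectrum_real i
    rw [← spectrum.singleton_sub_eq, hH.spectrum_real_eq_range_eigenvalues] at hi
    obtain ⟨_, rfl, _, ⟨j, rfl⟩, hj⟩ := hi
    simp only [Pi.zero_apply]
    linarith [hv j]
  have hnonneg := hpsd.dotProduct_mulVec_nonneg x
  rw [Algebra.algebraMap_eq_smul_one, sub_mulVec, smul_mulVec, one_mulVec, dotProduct_sub,
    dotProduct_smul, star_trivial, smul_eq_mul] at hnonneg
  linarith

theorem div_mul_sqrt_one_add_sub_one_le {G a c m : ℝ} (hG : 0 ≤ G) (ha : 0 ≤ a) (hm : 0 ≤ m)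
    (h : c ≤ G * m + a / 2 * m ^ 2) : G / a * (√(1 + 2 * a * c / G ^ 2) - 1) ≤ m := by
  rcases ha.eq_or_lt with rfl | ha
  · simpa
  rcases hG.eq_or_lt with rfl | hG
  · simpa
  have hsqrt : √(1 + 2 * a * c / G ^ 2) ≤ 1 + a * m / G := by
    refine Real.sqrt_le_iff.mpr ⟨by positivity, ?_⟩
    have hgap : 0 ≤ G * m + a / 2 * m ^ 2 - c := by linarith
    have hdiff : (1 + a * m / G) ^ 2 - (1 + 2 * a * c / G ^ 2)
        = 2 * a * (G * m + a / 2 * m ^ 2 - c) / G ^ 2 := by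
      field_simp
      ring
    rw [← sub_nonneg, hdiff]
    positivity
  calc G / a * (√(1 + 2 * a * c / G ^ 2) - 1) ≤ G / a * (a * m / G) := by gcongr; linarith
    _ = m := by field_simp

theorem stmt_2_general (n : ℕ) (H : Matrix (Fin n) (Fin n) ℝ) (hH : H.IsHermitian)
    (v : ℝ) (hv : IsGreatest (Set.range hH.eigenvalues) v) (hv0 : 0 < v)
    (g δ : Fin n → ℝ) (c : ℝ)
    (hδ : g ⬝ᵥ δ + (1 / 2) * (δ ⬝ᵥ H.mulVec δ) ≥ c) :
    ‖δ‖ ≥ ((∑ i, |g i|) / (n * v)) *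
      (Real.sqrt (1 + 2 * n * v * c / (∑ i, |g i|) ^ 2) - 1) := by
  have hlinear := dotProduct_le_sum_abs_mul_norm g δ
  have hquadratic : δ ⬝ᵥ H *ᵥ δ ≤ n * v * ‖δ‖ ^ 2 :=
    calc δ ⬝ᵥ H *ᵥ δ ≤ v * (δ ⬝ᵥ δ) :=
          hH.dotProduct_mulVec_le_mul_dotProduct (fun i => hv.2 ⟨i, rfl⟩) δ
      _ ≤ v * (n * ‖δ‖ ^ 2) := by
          gcongr; simpa using dotProduct_self_le_card_mul_norm_sq δ
      _ = n * v * ‖δ‖ ^ 2 := by ring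
  have hroot := div_mul_sqrt_one_add_sub_one_le (c := c) (by positivity : 0 ≤ ∑ i, |g i|)
    (by positivity : (0 : ℝ) ≤ n * v) (norm_nonneg δ) (by linarith)
  rwa [← mul_assoc 2] at hroot

theorem stmt_2 (n : ℕ) (hn : 1 ≤ n) (H : Matrix (Fin n) (Fin n) ℝ) (hH : H.IsHermitian)
    (v : ℝ) (hv : IsGreatest (Set.range hH.eigenvalues) v) (hv0 : 0 < v)
    (g δ : Fin n → ℝ) (hg : 0 < ∑ i, |g i|) (c : ℝ) (hc : 0 < c)
    (hδ : g ⬝ᵥ δ + (1 / 2) * (δ ⬝ᵥ H.mulVec δ) ≥ c) :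
    ‖δ‖ ≥ ((∑ i, |g i|) / (n * v)) *
      (Real.sqrt (1 + 2 * n * v * c / (∑ i, |g i|) ^ 2) - 1) :=
  stmt_2_general n H hH v hv hv0 g δ c hδ
end

section
/- Let g ≥ 0, v > 0, c > 0. Define B(g, v) = (g/v)·(√(1 + 2vc/g²) − 1) for g > 0 and B(0, v) = √(2c/v). Then B(g, v₁) > B(g, v₂) whenever 0 < v₁ < v₂, for every g ≥ 0. -/
/- Rationalising `√(g² + 2vc) - g` gives one closed form for both branches of `B`,
`B c g v = 2c / (g + √(g² + 2vc))`, whose denominator is strictly increasing in `v`. -/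

noncomputable def B (c g v : ℝ) : ℝ :=
  if 0 < g then (g / v) * (Real.sqrt (1 + 2 * v * c / g ^ 2) - 1)
  else Real.sqrt (2 * c / v)

theorem B_eq_div_add_sqrt {c g v : ℝ} (hc : 0 ≤ c) (hg : 0 ≤ g) (hv : 0 < v) :
    B c g v = 2 * c / (g + √(g ^ 2 + 2 * v * c)) := by
  set s := √(g ^ 2 + 2 * v * c)
  have hs_nonneg : 0 ≤ s := Real.sqrt_nonneg _
  have hs_sq : s ^ 2 = g ^ 2 + 2 * v * c := Real.sq_sqrt (by positivity)
  rcases hg.lt_or_eq with hg | rfl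
  · have hroot : √(1 + 2 * v * c / g ^ 2) = s / g := by
      rw [Real.sqrt_eq_iff_mul_self_eq (by positivity) (by positivity)]
      field_simp
      linear_combination -hs_sq
    rw [B, if_pos hg, hroot, eq_div_iff (by positivity)]
    field_simp
    linear_combination hs_sq
  · rw [B, if_neg (lt_irrefl 0), zero_add,
      Real.sqrt_eq_iff_mul_self_eq (by positivity) (by positivity)]
    rcases hc.lt_or_eq with hc | rfl
    · have hs_pos : 0 < s := Real.sqrt_pos.2 (by positivity)
      field_simp
      linear_combination hs_sq
    · simp

theorem B_strictAntiOn {c g : ℝ} (hc : 0 < c) (hg : 0 ≤ g) : StrictAntiOn (B c g) (Set.Ioi 0) := by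
  intro v₁ (hv₁ : 0 < v₁) v₂ (hv₂ : 0 < v₂) hlt
  rw [B_eq_div_add_sqrt hc.le hg hv₁, B_eq_div_add_sqrt hc.le hg hv₂]
  have hroot_lt : √(g ^ 2 + 2 * v₁ * c) < √(g ^ 2 + 2 * v₂ * c) :=
    Real.sqrt_lt_sqrt (by positivity) (by nlinarith)
  exact div_lt_div_of_pos_left (by positivity) (by positivity) (by linarith)

theorem stmt_19 (c : ℝ) (hc : 0 < c) :
    ∀ g : ℝ, 0 ≤ g → ∀ v₁ v₂ : ℝ, 0 < v₁ → v₁ < v₂ → B c g v₁ > B c g v₂ :=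
  fun _ hg _ _ hv₁ hlt => B_strictAntiOn hc hg hv₁ (hv₁.trans hlt : _ < _) hlt
end
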